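/- arXiv:1302.4624 — 2 statements merged into one kernel-verified Lean document; each statement's English description precedes it below -/
import Mathlib

section
/- Let $\eta:[0,T]\to[0,\infty]$ satisfy, for all $t\in[0,T]$, the renewal equation $\eta(t)=\eta(0)e^{-\beta t}+\int_0^t \beta e^{-\beta s}\sum_{k=0}^{n_0} c_k\,\eta(t-s)^k\,ds$ where $c_k\ge0$, $\beta>0$, $\eta(0)=\psi_0>0$. Then as long as $\eta$ is finite on $[0,t_0)$, it coincides there with $\psi_0\,\rho$, where $\rho$ is the unique solution of the ODE $\rho'(t)=\beta\big(\sum_{k=0}^{n_0} c_k\psi_0^{k-1}\rho(t)^k-\rho(t)\big)$, $\rho(0)=1$. -/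
/-!
Substituting `u = t - s` and pulling out `e^{-βt}` turns the renewal equation into
`η t = e^{-βt} (ψ₀ + I t)` with `I t = ∫_0^t β e^{βu} ∑ₖ cₖ η(u)^k du`. As long as `η` is finite,
so is `I`, hence `η ≤ ψ₀ + I` keeps the integrand bounded on compact subintervals of `[0, t₀)`.
So `I` is locally Lipschitz, hence continuous there, which makes the integrand continuous and
`I` differentiable by the fundamental theorem of calculus. Differentiating
`e^{βt} η t = ψ₀ + I t` shows that `η / ψ₀` solves the ODE, and uniqueness identifies it with `ρ`.
-/

open Set MeasureTheory
open scoped ENNReal NNReal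

theorem lintegral_Ioc_comp_const_sub (f : ℝ → ℝ≥0∞) (t a b : ℝ) :
    ∫⁻ s in Ioc a b, f (t - s) = ∫⁻ u in Ico (t - b) (t - a), f u := by
  rw [(volume.measurePreserving_sub_left t).setLIntegral_comp_emb
    (MeasurableEquiv.subLeft t).measurableEmbedding, image_const_sub_Ioc]

theorem setLIntegral_Ico_le_add_mul {g : ℝ → ℝ≥0∞} {a b : ℝ} {C : ℝ≥0}
    (hg : ∀ u ∈ Ico a b, g u ≤ C) {t₁ t₂ : ℝ} (h₂ : t₂ ≤ b) :
    ∫⁻ u in Ico a t₂, g u ≤ (∫⁻ u in Ico a t₁, g u) + C * ENNReal.ofReal (t₂ - t₁) := by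
  have hdiff : Ico a t₂ \ Ico a t₁ ⊆ Ico t₁ t₂ := fun u hu =>
    ⟨not_lt.1 fun h => hu.2 ⟨hu.1.1, h⟩, hu.1.2⟩
  calc ∫⁻ u in Ico a t₂, g u
      ≤ ∫⁻ u in Ico a t₁ ∪ (Ico a t₂ \ Ico a t₁), g u :=
        lintegral_mono_set (sdiff_subset_iff.1 subset_rfl)
    _ ≤ (∫⁻ u in Ico a t₁, g u) + ∫⁻ u in Ico a t₂ \ Ico a t₁, g u := lintegral_union_le _ _ _
    _ ≤ (∫⁻ u in Ico a t₁, g u) + ∫⁻ _ in Ico a t₂ \ Ico a t₁, (C : ℝ≥0∞) := by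
        refine add_le_add le_rfl ?_
        exact setLIntegral_mono' (measurableSet_Ico.diff measurableSet_Ico)
          fun u hu => hg u ⟨hu.1.1, hu.1.2.trans_le h₂⟩
    _ ≤ (∫⁻ u in Ico a t₁, g u) + C * ENNReal.ofReal (t₂ - t₁) := by
        rw [setLIntegral_const, ← Real.volume_Ico]
        exact add_le_add le_rfl (mul_le_mul_right (measure_mono hdiff) _)

theorem setLIntegral_Ico_ne_top {g : ℝ → ℝ≥0∞} {a b : ℝ} {C : ℝ≥0}
    (hg : ∀ u ∈ Ico a b, g u ≤ C) : ∫⁻ u in Ico a b, g u ≠ ⊤ :=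
  ((setLIntegral_mono' measurableSet_Ico hg).trans_lt <| by
    rw [setLIntegral_const]; exact ENNReal.mul_lt_top ENNReal.coe_lt_top measure_Ico_lt_top).ne

theorem lipschitzOnWith_toReal_setLIntegral_Ico {g : ℝ → ℝ≥0∞} {a b : ℝ} {C : ℝ≥0}
    (hg : ∀ u ∈ Ico a b, g u ≤ C) :
    LipschitzOnWith C (fun t => (∫⁻ u in Ico a t, g u).toReal) (Iic b) := by
  have hfin : ∀ t ≤ b, ∫⁻ u in Ico a t, g u ≠ ⊤ := fun t ht =>
    setLIntegral_Ico_ne_top fun u hu => hg u ⟨hu.1, hu.2.trans_le ht⟩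
  refine LipschitzOnWith.of_le_add_mul C fun x hx y hy => ?_
  rcases le_total x y with hxy | hyx
  · calc (∫⁻ u in Ico a x, g u).toReal ≤ (∫⁻ u in Ico a y, g u).toReal :=
          ENNReal.toReal_mono (hfin y hy) (lintegral_mono_set (Ico_subset_Ico_right hxy))
      _ ≤ _ := le_add_of_nonneg_right (by positivity)
  · rw [Real.dist_eq, abs_of_nonneg (sub_nonneg.2 hyx)]
    have h := ENNReal.toReal_mono (by finiteness [hfin y hy])
      (setLIntegral_Ico_le_add_mul hg hx)
    rwa [ENNReal.toReal_add (hfin y hy) (by finiteness), ENNReal.toReal_mul, ENNReal.coe_toReal,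
      ENNReal.toReal_ofReal (sub_nonneg.2 hyx)] at h

noncomputable section

namespace Renewal

variable (β ψ₀ : ℝ) (n₀ : ℕ) (c : ℕ → ℝ) (η : ℝ → ℝ≥0∞)

def offspringPoly (x : ℝ) : ℝ := ∑ k ∈ Finset.range (n₀ + 1), c k * x ^ k

def IsRenewalSolution : Prop :=
  ∀ t : ℝ, 0 ≤ t →
    η t = ENNReal.ofReal (ψ₀ * Real.exp (-β * t)) +
      ∫⁻ s in Ioc (0 : ℝ) t,
        ENNReal.ofReal (β * Real.exp (-β * s)) *
          ∑ k ∈ Finset.range (n₀ + 1), ENNReal.ofReal (c k) * (η (t - s)) ^ k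

def renewalIntegral (t : ℝ) : ℝ≥0∞ :=
  ∫⁻ u in Ico 0 t, ENNReal.ofReal (β * Real.exp (β * u)) *
    ∑ k ∈ Finset.range (n₀ + 1), ENNReal.ofReal (c k) * η u ^ k

/- `η` is not assumed measurable, so the real integrand expresses `η u` through the renewal
integral itself, which is monotone, hence measurable. -/
def renewalDensity (u : ℝ) : ℝ :=
  β * Real.exp (β * u) *
    offspringPoly n₀ c (Real.exp (-β * u) * (ψ₀ + (renewalIntegral β n₀ c η u).toReal))

/- This is `η / ψ₀` on `[0, t₀)`, but it is defined on all of `ℝ` through an interval integral, so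
that it has a two-sided derivative at `0`. -/
def normalizedSolution (t : ℝ) : ℝ :=
  Real.exp (-β * t) * (ψ₀ + ∫ u in (0 : ℝ)..t, renewalDensity β ψ₀ n₀ c η u) / ψ₀

variable {β ψ₀ n₀ c η}

theorem offspringPoly_nonneg (hc : ∀ k, 0 ≤ c k) {x : ℝ} (hx : 0 ≤ x) :
    0 ≤ offspringPoly n₀ c x :=
  Finset.sum_nonneg fun k _ => mul_nonneg (hc k) (pow_nonneg hx k)

theorem ofReal_offspringPoly (hc : ∀ k, 0 ≤ c k) {x : ℝ} (hx : 0 ≤ x) :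
    ENNReal.ofReal (offspringPoly n₀ c x) =
      ∑ k ∈ Finset.range (n₀ + 1), ENNReal.ofReal (c k) * ENNReal.ofReal x ^ k := by
  rw [offspringPoly, ENNReal.ofReal_sum_of_nonneg fun k _ => mul_nonneg (hc k) (pow_nonneg hx k)]
  simp only [ENNReal.ofReal_mul (hc _), ENNReal.ofReal_pow hx]

theorem sum_mul_zpow_sub_one_mul_pow (hψ₀ : ψ₀ ≠ 0) (x : ℝ) :
    ∑ k ∈ Finset.range (n₀ + 1), c k * ψ₀ ^ ((k : ℤ) - 1) * x ^ k =
      offspringPoly n₀ c (ψ₀ * x) / ψ₀ := by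
  rw [offspringPoly, Finset.sum_div]
  refine Finset.sum_congr rfl fun k _ => ?_
  rw [zpow_sub₀ hψ₀, zpow_natCast, zpow_one, mul_pow]
  field_simp

theorem IsRenewalSolution.eq_exp_mul (h : IsRenewalSolution β ψ₀ n₀ c η) {t : ℝ} (ht : 0 ≤ t) :
    η t = ENNReal.ofReal (Real.exp (-β * t)) *
      (ENNReal.ofReal ψ₀ + renewalIntegral β n₀ c η t) := by
  have hsplit : ∀ u, ENNReal.ofReal (β * Real.exp (-β * (t - u))) =
      ENNReal.ofReal (Real.exp (-β * t)) * ENNReal.ofReal (β * Real.exp (β * u)) := fun u => by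
    rw [← ENNReal.ofReal_mul (Real.exp_nonneg _), mul_left_comm, ← Real.exp_add]
    ring_nf
  have hcov := lintegral_Ioc_comp_const_sub
    (fun u => ENNReal.ofReal (β * Real.exp (-β * (t - u))) *
      ∑ k ∈ Finset.range (n₀ + 1), ENNReal.ofReal (c k) * η u ^ k) t 0 t
  simp only [sub_sub_cancel, sub_self, sub_zero] at hcov
  rw [h t ht, hcov]
  simp only [hsplit, mul_assoc]
  rw [lintegral_const_mul' _ _ ENNReal.ofReal_ne_top, mul_add,
    ← ENNReal.ofReal_mul (Real.exp_nonneg _), mul_comm ψ₀, renewalIntegral]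

theorem renewalIntegral_mono : Monotone (renewalIntegral β n₀ c η) :=
  fun _ _ hab => lintegral_mono_set (Ico_subset_Ico_right hab)

theorem IsRenewalSolution.renewalIntegral_ne_top (h : IsRenewalSolution β ψ₀ n₀ c η) {t : ℝ}
    (ht : 0 ≤ t) (hη : η t ≠ ⊤) : renewalIntegral β n₀ c η t ≠ ⊤ := fun htop => by
  rw [h.eq_exp_mul ht, htop, add_top,
    ENNReal.mul_top (ENNReal.ofReal_pos.2 (Real.exp_pos _)).ne'] at hη
  exact hη rfl

theorem IsRenewalSolution.eq_ofReal (h : IsRenewalSolution β ψ₀ n₀ c η) (hψ₀ : 0 ≤ ψ₀) {t : ℝ}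
    (ht : 0 ≤ t) (hη : η t ≠ ⊤) :
    η t = ENNReal.ofReal (Real.exp (-β * t) * (ψ₀ + (renewalIntegral β n₀ c η t).toReal)) := by
  rw [h.eq_exp_mul ht, ENNReal.ofReal_mul (Real.exp_nonneg _),
    ENNReal.ofReal_add hψ₀ ENNReal.toReal_nonneg,
    ENNReal.ofReal_toReal (h.renewalIntegral_ne_top ht hη)]

theorem renewalDensity_nonneg (hβ : 0 ≤ β) (hψ₀ : 0 ≤ ψ₀) (hc : ∀ k, 0 ≤ c k) (u : ℝ) :
    0 ≤ renewalDensity β ψ₀ n₀ c η u :=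
  mul_nonneg (by positivity) (offspringPoly_nonneg hc (by positivity))

theorem measurable_renewalDensity : Measurable (renewalDensity β ψ₀ n₀ c η) := by
  have : Measurable fun u => (renewalIntegral β n₀ c η u).toReal :=
    renewalIntegral_mono.measurable.ennreal_toReal
  unfold renewalDensity offspringPoly
  fun_prop

theorem IsRenewalSolution.integrand_eq (h : IsRenewalSolution β ψ₀ n₀ c η) (hβ : 0 ≤ β)
    (hψ₀ : 0 ≤ ψ₀) (hc : ∀ k, 0 ≤ c k) {u : ℝ} (hu : 0 ≤ u) (hη : η u ≠ ⊤) :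
    ENNReal.ofReal (β * Real.exp (β * u)) *
        ∑ k ∈ Finset.range (n₀ + 1), ENNReal.ofReal (c k) * η u ^ k =
      ENNReal.ofReal (renewalDensity β ψ₀ n₀ c η u) := by
  rw [h.eq_ofReal hψ₀ hu hη, ← ofReal_offspringPoly hc (by positivity),
    ← ENNReal.ofReal_mul (by positivity), renewalDensity]

theorem IsRenewalSolution.toReal_renewalIntegral (h : IsRenewalSolution β ψ₀ n₀ c η)
    (hβ : 0 ≤ β) (hψ₀ : 0 ≤ ψ₀) (hc : ∀ k, 0 ≤ c k) {t₀ : ℝ} (hfin : ∀ t ∈ Ico 0 t₀, η t < ⊤)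
    {t : ℝ} (ht : t ∈ Ico 0 t₀) :
    (renewalIntegral β n₀ c η t).toReal = ∫ u in (0 : ℝ)..t, renewalDensity β ψ₀ n₀ c η u := by
  have hI : renewalIntegral β n₀ c η t =
      ∫⁻ u in Ico 0 t, ENNReal.ofReal (renewalDensity β ψ₀ n₀ c η u) :=
    setLIntegral_congr_fun measurableSet_Ico fun u hu =>
      h.integrand_eq hβ hψ₀ hc hu.1 (hfin u ⟨hu.1, hu.2.trans ht.2⟩).ne
  rw [hI, intervalIntegral.integral_of_le ht.1, ← integral_Ico_eq_integral_Ioc,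
    integral_eq_lintegral_of_nonneg_ae (ae_of_all _ (renewalDensity_nonneg hβ hψ₀ hc))
      measurable_renewalDensity.aestronglyMeasurable]

theorem IsRenewalSolution.continuousAt_toReal_renewalIntegral
    (h : IsRenewalSolution β ψ₀ n₀ c η) (hβ : 0 ≤ β) {t₀ : ℝ}
    (hfin : ∀ t ∈ Ico 0 t₀, η t < ⊤)
    {t : ℝ} (ht : t ∈ Ico 0 t₀) :
    ContinuousAt (fun t => (renewalIntegral β n₀ c η t).toReal) t := by
  obtain ⟨b, htb, hbt₀⟩ := exists_between ht.2
  have hb : 0 ≤ b := ht.1.trans htb.le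
  set M := ENNReal.ofReal ψ₀ + renewalIntegral β n₀ c η b
  set C := ENNReal.ofReal (β * Real.exp (β * b)) *
    ∑ k ∈ Finset.range (n₀ + 1), ENNReal.ofReal (c k) * M ^ k
  have hM : M ≠ ⊤ := by finiteness [h.renewalIntegral_ne_top hb (hfin b ⟨hb, hbt₀⟩).ne]
  have hC : C ≠ ⊤ := ENNReal.mul_ne_top ENNReal.ofReal_ne_top <| ENNReal.sum_ne_top.2 fun k _ =>
    ENNReal.mul_ne_top ENNReal.ofReal_ne_top (ENNReal.pow_ne_top hM)
  have hbound : ∀ u ∈ Ico 0 b, ENNReal.ofReal (β * Real.exp (β * u)) *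
      ∑ k ∈ Finset.range (n₀ + 1), ENNReal.ofReal (c k) * η u ^ k ≤ C.toNNReal := by
    intro u hu
    have hηu : η u ≤ M := by
      rw [h.eq_exp_mul hu.1]
      calc _ ≤ 1 * (ENNReal.ofReal ψ₀ + renewalIntegral β n₀ c η u) := by
            gcongr
            exact ENNReal.ofReal_le_one.2 (Real.exp_le_one_iff.2 (by nlinarith [hu.1]))
        _ ≤ M := by rw [one_mul]; exact add_le_add le_rfl (renewalIntegral_mono hu.2.le)
    rw [ENNReal.coe_toNNReal hC]
    refine mul_le_mul' ?_ (Finset.sum_le_sum fun k _ => ?_)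
    · gcongr
      exact hu.2.le
    · gcongr
  exact (lipschitzOnWith_toReal_setLIntegral_Ico hbound).continuousOn.continuousAt
    (Iic_mem_nhds htb)

theorem IsRenewalSolution.continuousAt_renewalDensity (h : IsRenewalSolution β ψ₀ n₀ c η)
    (hβ : 0 ≤ β) {t₀ : ℝ} (hfin : ∀ t ∈ Ico 0 t₀, η t < ⊤) {t : ℝ} (ht : t ∈ Ico 0 t₀) :
    ContinuousAt (renewalDensity β ψ₀ n₀ c η) t := by
  have := h.continuousAt_toReal_renewalIntegral hβ hfin ht
  unfold renewalDensity offspringPoly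
  fun_prop

theorem IsRenewalSolution.hasDerivAt_integral_renewalDensity (h : IsRenewalSolution β ψ₀ n₀ c η)
    (hβ : 0 ≤ β) {t₀ : ℝ} (hfin : ∀ t ∈ Ico 0 t₀, η t < ⊤) {t : ℝ} (ht : t ∈ Ico 0 t₀) :
    HasDerivAt (fun t => ∫ u in (0 : ℝ)..t, renewalDensity β ψ₀ n₀ c η u)
      (renewalDensity β ψ₀ n₀ c η t) t :=
  intervalIntegral.integral_hasDerivAt_right
    (ContinuousOn.intervalIntegrable_of_Icc ht.1 fun _ hu =>
      (h.continuousAt_renewalDensity hβ hfin ⟨hu.1, hu.2.trans_lt ht.2⟩).continuousWithinAt)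
    measurable_renewalDensity.stronglyMeasurable.stronglyMeasurableAtFilter
    (h.continuousAt_renewalDensity hβ hfin ht)

theorem normalizedSolution_zero (hψ₀ : ψ₀ ≠ 0) : normalizedSolution β ψ₀ n₀ c η 0 = 1 := by
  simp [normalizedSolution, hψ₀]

theorem IsRenewalSolution.mul_normalizedSolution (h : IsRenewalSolution β ψ₀ n₀ c η)
    (hβ : 0 ≤ β) (hψ₀ : 0 < ψ₀) (hc : ∀ k, 0 ≤ c k) {t₀ : ℝ} (hfin : ∀ t ∈ Ico 0 t₀, η t < ⊤)
    {t : ℝ} (ht : t ∈ Ico 0 t₀) :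
    ψ₀ * normalizedSolution β ψ₀ n₀ c η t =
      Real.exp (-β * t) * (ψ₀ + (renewalIntegral β n₀ c η t).toReal) := by
  rw [normalizedSolution, h.toReal_renewalIntegral hβ hψ₀.le hc hfin ht]
  field_simp

theorem IsRenewalSolution.hasDerivAt_normalizedSolution (h : IsRenewalSolution β ψ₀ n₀ c η)
    (hβ : 0 ≤ β) (hψ₀ : 0 < ψ₀) (hc : ∀ k, 0 ≤ c k) {t₀ : ℝ} (hfin : ∀ t ∈ Ico 0 t₀, η t < ⊤)
    {t : ℝ} (ht : t ∈ Ico 0 t₀) :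
    HasDerivAt (normalizedSolution β ψ₀ n₀ c η)
      (β * (∑ k ∈ Finset.range (n₀ + 1),
        c k * ψ₀ ^ ((k : ℤ) - 1) * normalizedSolution β ψ₀ n₀ c η t ^ k -
          normalizedSolution β ψ₀ n₀ c η t)) t := by
  have hexp : HasDerivAt (fun s => Real.exp (-β * s)) (Real.exp (-β * t) * -β) t := by
    simpa using ((hasDerivAt_id t).const_mul (-β)).exp
  have hderiv : HasDerivAt (normalizedSolution β ψ₀ n₀ c η)
      ((Real.exp (-β * t) * -β * (ψ₀ + ∫ u in (0 : ℝ)..t, renewalDensity β ψ₀ n₀ c η u) +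
        Real.exp (-β * t) * renewalDensity β ψ₀ n₀ c η t) / ψ₀) t :=
    (hexp.mul ((h.hasDerivAt_integral_renewalDensity hβ hfin ht).const_add ψ₀)).div_const ψ₀
  have hσ := h.mul_normalizedSolution hβ hψ₀ hc hfin ht
  have hexp_mul : Real.exp (-β * t) * Real.exp (β * t) = 1 := by
    rw [← Real.exp_add]; ring_nf; exact Real.exp_zero
  refine hderiv.congr_deriv ?_
  rw [renewalDensity, ← hσ, sum_mul_zpow_sub_one_mul_pow hψ₀.ne']
  generalize offspringPoly n₀ c (ψ₀ * normalizedSolution β ψ₀ n₀ c η t) = p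
  rw [normalizedSolution]
  simp only [neg_mul] at hexp_mul ⊢
  field_simp
  linear_combination β * p * hexp_mul

end Renewal

end

theorem stmt_6_general (β ψ₀ t₀ : ℝ) (hβ : 0 < β) (hψ₀ : 0 < ψ₀)
    (n₀ : ℕ) (c : ℕ → ℝ) (hc : ∀ k, 0 ≤ c k)
    (η : ℝ → ENNReal)
    (hrenew : ∀ t : ℝ, 0 ≤ t →
      η t = ENNReal.ofReal (ψ₀ * Real.exp (-β * t)) +
        ∫⁻ s in Ioc (0 : ℝ) t,
          ENNReal.ofReal (β * Real.exp (-β * s)) *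
            ∑ k ∈ Finset.range (n₀ + 1), ENNReal.ofReal (c k) * (η (t - s)) ^ k)
    (hfin : ∀ t ∈ Ico (0 : ℝ) t₀, η t < ⊤)
    (ρ : ℝ → ℝ)
    (huniq : ∀ ρ' : ℝ → ℝ, ρ' 0 = 1 →
      (∀ t ∈ Ico (0 : ℝ) t₀,
        HasDerivAt ρ'
          (β * (∑ k ∈ Finset.range (n₀ + 1), c k * ψ₀ ^ ((k : ℤ) - 1) * ρ' t ^ k - ρ' t)) t) →
      EqOn ρ' ρ (Ico 0 t₀)) :
    ∀ t ∈ Ico (0 : ℝ) t₀, η t = ENNReal.ofReal (ψ₀ * ρ t) := by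
  have h : Renewal.IsRenewalSolution β ψ₀ n₀ c η := hrenew
  have hρ : EqOn (Renewal.normalizedSolution β ψ₀ n₀ c η) ρ (Ico 0 t₀) :=
    huniq _ (Renewal.normalizedSolution_zero hψ₀.ne') fun t ht =>
      h.hasDerivAt_normalizedSolution hβ.le hψ₀ hc hfin ht
  intro t ht
  rw [← hρ ht, h.mul_normalizedSolution hβ.le hψ₀ hc hfin ht]
  exact h.eq_ofReal hψ₀.le ht.1 (hfin t ht).ne

/-- If `η` satisfies the renewal equation
`η(t) = ψ₀ e^{-βt} + ∫_0^t β e^{-βs} ∑ₖ cₖ η(t-s)^k ds`,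
then, as long as `η` is finite on `[0,t₀)`, it coincides there with `ψ₀ ρ`, where `ρ` is
the (unique) solution of `ρ' = β(∑ₖ cₖ ψ₀^{k-1} ρ^k - ρ)`, `ρ(0) = 1`. -/
theorem stmt_6 (β ψ₀ t₀ : ℝ) (hβ : 0 < β) (hψ₀ : 0 < ψ₀) (ht₀ : 0 < t₀)
    (n₀ : ℕ) (c : ℕ → ℝ) (hc : ∀ k, 0 ≤ c k)
    (η : ℝ → ENNReal) (hη0 : η 0 = ENNReal.ofReal ψ₀)
    (hrenew : ∀ t : ℝ, 0 ≤ t →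
      η t = ENNReal.ofReal (ψ₀ * Real.exp (-β * t)) +
        ∫⁻ s in Ioc (0 : ℝ) t,
          ENNReal.ofReal (β * Real.exp (-β * s)) *
            ∑ k ∈ Finset.range (n₀ + 1), ENNReal.ofReal (c k) * (η (t - s)) ^ k)
    (hfin : ∀ t ∈ Ico (0 : ℝ) t₀, η t < ⊤)
    (ρ : ℝ → ℝ) (hρ0 : ρ 0 = 1)
    (hsol : ∀ t ∈ Ico (0 : ℝ) t₀,
      HasDerivAt ρ
        (β * (∑ k ∈ Finset.range (n₀ + 1), c k * ψ₀ ^ ((k : ℤ) - 1) * ρ t ^ k - ρ t)) t)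
    (huniq : ∀ ρ' : ℝ → ℝ, ρ' 0 = 1 →
      (∀ t ∈ Ico (0 : ℝ) t₀,
        HasDerivAt ρ'
          (β * (∑ k ∈ Finset.range (n₀ + 1), c k * ψ₀ ^ ((k : ℤ) - 1) * ρ' t ^ k - ρ' t)) t) →
      EqOn ρ' ρ (Ico 0 t₀)) :
    ∀ t ∈ Ico (0 : ℝ) t₀, η t = ENNReal.ofReal (ψ₀ * ρ t) :=
  stmt_6_general β ψ₀ t₀ hβ hψ₀ n₀ c hc η hrenew hfin ρ huniq
end

section
/- Let $\ell(s)=\beta\big(\sum_{k=0}^{n_0}|a_k|\,\psi_0^{k-1}s^k-s\big)$ with $\beta>0$, $|a_k|\ge0$, $\psi_0>0$, and suppose $\ell$ satisfies one of: (i) $\ell(1)\le0$; (ii) $\ell(1)>0$ and $\ell$ has a zero $\hat s>1$ with $\ell>0$ on $[1,\hat s)$; (iii) $\ell>0$ on $[1,\infty)$ and $\int_1^\infty ds/\ell(s)>T$. Then for all sufficiently small $\varepsilon>0$, the perturbed function $\ell_\varepsilon(s)=\beta\big(\sum_{k=0}^{n_0}(1+\varepsilon)|a_k|\,((1+\varepsilon)\psi_0)^{k-1}s^k-s\big)$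 also satisfies one of conditions (i)–(iii), and hence the ODE $\rho'=\ell_\varepsilon(\rho)$, $\rho(0)=1$ admits a unique bounded solution on $[0,T]$. -/
open Set MeasureTheory

/-- The conditions `(ℓ1)-(ℓ3)` of Assumption 2.1 for a polynomial `ℓ` on horizon `T`. -/
def SatisfiesEllCond (T : ℝ) (ℓ : ℝ → ℝ) : Prop :=
  ℓ 1 ≤ 0 ∨
  (0 < ℓ 1 ∧ ∃ sHat : ℝ, 1 < sHat ∧ ℓ sHat = 0 ∧ ∀ s ∈ Ico (1 : ℝ) sHat, 0 < ℓ s) ∨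
  ((∀ s : ℝ, 1 ≤ s → 0 < ℓ s) ∧
    ENNReal.ofReal T < ∫⁻ s in Ioi (1 : ℝ), ENNReal.ofReal (1 / ℓ s))

/-!
Write `P(x) = ∑ₖ cₖ ψ₀^(k-1) xᵏ`, so that `ℓ_ε(s) = β (P((1+ε)s) - s)`. Reading `1/ℓ` as
`+∞` where `ℓ ≤ 0`, the conditions (ℓ1)-(ℓ3) say exactly that `∫_(1,∞) 1/ℓ > T`: a point
`z ≥ 1` with `ℓ(z) ≤ 0` forces `1/ℓ(s) ≥ 1/(K|s - z|)` on a bounded interval around `z`, which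
is not integrable. As `P` is nondecreasing on `[0, ∞)`, `ℓ_ε` decreases to `ℓ` on `[1, ∞)` as
`ε ↓ 0`, so by monotone convergence the integral for `ℓ_ε` tends to the one for `ℓ` and the
strict inequality survives small perturbations.

The solution of `ρ' = ℓ_ε(ρ)`, `ρ(0) = 1`, comes from separation of variables: `ρ` inverts
`x ↦ ∫_1^x ds / ℓ_ε(s)`, and this primitive passes `T` before `x` reaches the first zero of
`ℓ_ε` above `1` (or, if `ℓ_ε(1) < 0`, the last zero below `1`, which exists since
`ℓ_ε(0) ≥ 0`). Uniqueness is the Lipschitz uniqueness theorem, `ℓ_ε` being Lipschitz on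
bounded sets.
-/

open Filter Topology Function

theorem hasDerivAt_invFunOn_of_strictMonoOn {F F' : ℝ → ℝ} {u v t : ℝ} (huv : u ≤ v)
    (hF : ContinuousOn F (Icc u v)) (hmono : StrictMonoOn F (Icc u v))
    (hder : ∀ s ∈ Ioo u v, HasDerivAt F (F' s) s) (hne : ∀ s ∈ Ioo u v, F' s ≠ 0)
    (ht : t ∈ Ioo (F u) (F v)) :
    HasDerivAt (invFunOn F (Icc u v)) (F' (invFunOn F (Icc u v) t))⁻¹ t := by
  set g := invFunOn F (Icc u v)
  have hsurj : SurjOn F (Icc u v) (Icc (F u) (F v)) := intermediate_value_Icc huv hF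
  have hright : ∀ y ∈ Ioo (F u) (F v), F (g y) = y := fun y hy =>
    hsurj.rightInvOn_invFunOn (Ioo_subset_Icc_self hy)
  have hmaps : ∀ y ∈ Ioo (F u) (F v), g y ∈ Ioo u v := by
    intro y hy
    have hgy := hsurj.mapsTo_invFunOn (Ioo_subset_Icc_self hy)
    refine ⟨hgy.1.lt_of_ne ?_, hgy.2.lt_of_ne ?_⟩ <;> rintro h
    · exact hy.1.ne (by rw [h, hright y hy])
    · exact hy.2.ne (by rw [← h, hright y hy])
  have hgmono : StrictMonoOn g (Ioo (F u) (F v)) := by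
    intro a ha b hb hab
    by_contra! h
    have := hmono.monotoneOn (Ioo_subset_Icc_self (hmaps b hb))
      (Ioo_subset_Icc_self (hmaps a ha)) h
    rw [hright a ha, hright b hb] at this
    exact hab.not_ge this
  have himage : Ioo u v ⊆ g '' Ioo (F u) (F v) := fun x hx =>
    ⟨F x, ⟨hmono (left_mem_Icc.2 huv) (Ioo_subset_Icc_self hx) hx.1,
      hmono (Ioo_subset_Icc_self hx) (right_mem_Icc.2 huv) hx.2⟩,
      hmono.injOn.leftInvOn_invFunOn (Ioo_subset_Icc_self hx)⟩
  have hcont : ContinuousAt g t :=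
    hgmono.continuousAt_of_image_mem_nhds (Ioo_mem_nhds ht.1 ht.2)
      (mem_of_superset (Ioo_mem_nhds (hmaps t ht).1 (hmaps t ht).2) himage)
  exact HasDerivAt.of_local_left_inverse hcont (hder _ (hmaps t ht)) (hne _ (hmaps t ht))
    (eventually_of_mem (Ioo_mem_nhds ht.1 ht.2) hright)

theorem exists_hasDerivAt_of_lt_integral_inv {f : ℝ → ℝ} (hf : Continuous f) {u x₀ v T : ℝ}
    (hu : u < x₀) (hv : x₀ < v) (hpos : ∀ s ∈ Icc u v, 0 < f s)
    (hT : T < ∫ s in x₀..v, (f s)⁻¹) :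
    ∃ ρ : ℝ → ℝ, ρ 0 = x₀ ∧ ∀ t ∈ Icc 0 T, HasDerivAt ρ (f (ρ t)) t := by
  set F : ℝ → ℝ := fun s => ∫ x in x₀..s, (f x)⁻¹
  have huv : u ≤ v := (hu.trans hv).le
  have hx₀ : x₀ ∈ Icc u v := ⟨hu.le, hv.le⟩
  have hcont : ContinuousOn (fun s => (f s)⁻¹) (Icc u v) :=
    hf.continuousOn.inv₀ fun s hs => (hpos s hs).ne'
  have hint {a b : ℝ} (ha : a ∈ Icc u v) (hb : b ∈ Icc u v) :
      IntervalIntegrable (fun s => (f s)⁻¹) volume a b :=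
    (hcont.mono (uIcc_subset_Icc ha hb)).intervalIntegrable
  have hFcont : ContinuousOn F (Icc u v) := by
    simpa only [uIcc_of_le huv] using intervalIntegral.continuousOn_primitive_interval'
      (hint (left_mem_Icc.2 huv) (right_mem_Icc.2 huv)) (by rwa [uIcc_of_le huv])
  have hFder : ∀ s ∈ Ioo u v, HasDerivAt F (f s)⁻¹ s := fun s hs =>
    intervalIntegral.integral_hasDerivAt_right (hint hx₀ (Ioo_subset_Icc_self hs))
      ((hcont.mono Ioo_subset_Icc_self).stronglyMeasurableAtFilter isOpen_Ioo s hs)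
      (hf.continuousAt.inv₀ (hpos s (Ioo_subset_Icc_self hs)).ne')
  have hFmono : StrictMonoOn F (Icc u v) :=
    strictMonoOn_of_deriv_pos (convex_Icc u v) hFcont fun s hs => by
      rw [interior_Icc] at hs
      rw [(hFder s hs).deriv]
      exact inv_pos.2 (hpos s (Ioo_subset_Icc_self hs))
  have hF₀ : F x₀ = 0 := intervalIntegral.integral_same
  have hFu : F u < 0 := hF₀ ▸ hFmono (left_mem_Icc.2 huv) hx₀ hu
  refine ⟨invFunOn F (Icc u v), hF₀ ▸ hFmono.injOn.leftInvOn_invFunOn hx₀, fun t ht => ?_⟩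
  have hder := hasDerivAt_invFunOn_of_strictMonoOn huv hFcont hFmono hFder
    (fun s hs => inv_ne_zero (hpos s (Ioo_subset_Icc_self hs)).ne')
    ⟨hFu.trans_le ht.1, ht.2.trans_lt hT⟩
  simpa only [inv_inv] using hder

theorem setLIntegral_Ioc_inv_ofReal_eq_ofReal_integral {f : ℝ → ℝ} (hf : Continuous f)
    {a b : ℝ} (hab : a ≤ b) (hpos : ∀ s ∈ Icc a b, 0 < f s) :
    ∫⁻ s in Ioc a b, (ENNReal.ofReal (f s))⁻¹ = ENNReal.ofReal (∫ s in a..b, (f s)⁻¹) := by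
  have hcont : ContinuousOn (fun s => (f s)⁻¹) (Icc a b) :=
    hf.continuousOn.inv₀ fun s hs => (hpos s hs).ne'
  rw [intervalIntegral.integral_of_le hab, ofReal_integral_eq_lintegral_ofReal
    (hcont.integrableOn_Icc.mono_set Ioc_subset_Icc_self)
    ((ae_restrict_iff' measurableSet_Ioc).2 (Eventually.of_forall fun s hs =>
      (inv_pos.2 (hpos s (Ioc_subset_Icc_self hs))).le))]
  exact setLIntegral_congr_fun measurableSet_Ioc fun s hs =>
    (ENNReal.ofReal_inv_of_pos (hpos s (Ioc_subset_Icc_self hs))).symm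

theorem exists_hasDerivAt_of_lt_setLIntegral {f : ℝ → ℝ} (hf : Continuous f) {x₀ v T : ℝ}
    (hv : x₀ < v) (hpos : ∀ s ∈ Icc x₀ v, 0 < f s)
    (hT : ENNReal.ofReal T < ∫⁻ s in Ioc x₀ v, (ENNReal.ofReal (f s))⁻¹) :
    ∃ ρ : ℝ → ℝ, ρ 0 = x₀ ∧ ∀ t ∈ Icc 0 T, HasDerivAt ρ (f (ρ t)) t := by
  rw [setLIntegral_Ioc_inv_ofReal_eq_ofReal_integral hf hv.le hpos,
    ENNReal.ofReal_lt_ofReal_iff'] at hT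
  have hnear : ∀ᶠ s in 𝓝[≤] x₀, 0 < f s :=
    nhdsWithin_le_nhds ((hf.tendsto x₀).eventually (lt_mem_nhds (hpos x₀ ⟨le_rfl, hv.le⟩)))
  obtain ⟨u, hu, hIcc⟩ := mem_nhdsLE_iff_exists_Icc_subset.1 hnear
  refine exists_hasDerivAt_of_lt_integral_inv hf hu hv (fun s hs => ?_) hT.1
  rcases le_total s x₀ with h | h
  exacts [hIcc ⟨hs.1, h⟩, hpos s ⟨h, hs.2⟩]

theorem exists_lt_setLIntegral_Ioc_of_lt_setLIntegral_Ioc {g : ℝ → ENNReal}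
    (hg : AEMeasurable g) {a b : ℝ} {c : ENNReal} (hab : a < b) (h : c < ∫⁻ s in Ioc a b, g s) :
    ∃ v ∈ Ioo a b, c < ∫⁻ s in Ioc a v, g s := by
  have hcov : AECover (volume.restrict (Ioc a b)) (𝓝[<] b) (Ioc a) :=
    aecover_Ioc_of_Ioc tendsto_const_nhds nhdsWithin_le_nhds
  have hlim := hcov.lintegral_tendsto_of_countably_generated hg.restrict
  obtain ⟨v, hv, hcv⟩ :=
    (Eventually.and (Ioo_mem_nhdsLT hab) (hlim.eventually_const_lt h)).exists
  refine ⟨v, hv, ?_⟩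
  rwa [Measure.restrict_restrict_of_subset (Ioc_subset_Ioc_right hv.2.le)] at hcv

theorem exists_lt_setLIntegral_Ioc_of_lt_setLIntegral_Ioi {g : ℝ → ENNReal}
    (hg : AEMeasurable g) {a : ℝ} {c : ENNReal} (h : c < ∫⁻ s in Ioi a, g s) :
    ∃ v > a, c < ∫⁻ s in Ioc a v, g s := by
  have hcov : AECover (volume.restrict (Ioi a)) atTop (Ioc a) :=
    ⟨(ae_restrict_iff' measurableSet_Ioi).2 <| Eventually.of_forall
      fun s hs => (eventually_ge_atTop s).mono fun _ hv => ⟨hs, hv⟩, fun _ => measurableSet_Ioc⟩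
  have hlim := hcov.lintegral_tendsto_of_countably_generated hg.restrict
  obtain ⟨v, hv, hcv⟩ := ((eventually_gt_atTop a).and (hlim.eventually_const_lt h)).exists
  refine ⟨v, hv, ?_⟩
  rwa [Measure.restrict_restrict_of_subset Ioc_subset_Ioi_self] at hcv

theorem setLIntegral_Ioc_inv_ofReal_eq_top {f : ℝ → ℝ} {K : NNReal} {a b z : ℝ} (hab : a < b)
    (hf : LipschitzOnWith K f (Icc a b)) (hz : z ∈ Icc a b) (hfz : f z ≤ 0) :
    ∫⁻ s in Ioc a b, (ENNReal.ofReal (f s))⁻¹ = ⊤ := by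
  have hsing : ∫⁻ s in Ioc a b, ‖(s - z)⁻¹‖ₑ = ⊤ := by
    have hni : ¬ IntegrableOn (fun s => (s - z)⁻¹) (Ioc a b) := by
      rw [← intervalIntegrable_iff_integrableOn_Ioc_of_le hab.le, intervalIntegrable_sub_inv_iff,
        uIcc_of_le hab.le]
      exact fun h => h.elim hab.ne (· hz)
    by_contra h
    exact hni ⟨by fun_prop, lt_top_iff_ne_top.2 h⟩
  have hle :
      ∀ s ∈ Ioc a b, (ENNReal.ofReal K)⁻¹ * ‖(s - z)⁻¹‖ₑ ≤ (ENNReal.ofReal (f s))⁻¹ := by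
    intro s hs
    have hs' : s ∈ Icc a b := Ioc_subset_Icc_self hs
    have hfs : f s ≤ K * |s - z| := by
      have := (le_abs_self _).trans (hf.dist_le_mul s hs' z hz)
      rw [Real.dist_eq] at this
      linarith
    have hinv : ‖(s - z)⁻¹‖ₑ ≤ ‖s - z‖ₑ⁻¹ := by
      rcases eq_or_ne (s - z) 0 with h | h
      · simp [h]
      · rw [enorm_inv h]
    calc (ENNReal.ofReal K)⁻¹ * ‖(s - z)⁻¹‖ₑ
        ≤ (ENNReal.ofReal K)⁻¹ * ‖s - z‖ₑ⁻¹ := by gcongr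
      _ = (ENNReal.ofReal (K * |s - z|))⁻¹ := by
        rw [ENNReal.ofReal_mul (by positivity), ← Real.enorm_eq_ofReal_abs,
          ENNReal.mul_inv (Or.inr enorm_ne_top) (by simp)]
      _ ≤ (ENNReal.ofReal (f s))⁻¹ := ENNReal.inv_le_inv.2 (ENNReal.ofReal_le_ofReal hfs)
  refine eq_top_iff.2 ?_
  calc ⊤ = (ENNReal.ofReal K)⁻¹ * ∫⁻ s in Ioc a b, ‖(s - z)⁻¹‖ₑ := by
        rw [hsing, ENNReal.mul_top (by simp)]
    _ ≤ ∫⁻ s in Ioc a b, (ENNReal.ofReal K)⁻¹ * ‖(s - z)⁻¹‖ₑ := lintegral_const_mul_le _ _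
    _ ≤ ∫⁻ s in Ioc a b, (ENNReal.ofReal (f s))⁻¹ := setLIntegral_mono' measurableSet_Ioc hle

theorem exists_eq_zero_of_pos_of_nonpos {f : ℝ → ℝ} (hf : Continuous f) {x₀ : ℝ}
    (hx₀ : 0 < f x₀) (hz : ∃ z, x₀ ≤ z ∧ f z ≤ 0) :
    ∃ b, x₀ < b ∧ f b = 0 ∧ ∀ s ∈ Ico x₀ b, 0 < f s := by
  obtain ⟨z, hxz, hfz⟩ := hz
  set S := Icc x₀ z ∩ {s | f s ≤ 0}
  have hS : IsCompact S := isCompact_Icc.inter_right (isClosed_le hf continuous_const)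
  obtain ⟨b, ⟨⟨hxb, hbz⟩, hfb⟩, hmin⟩ := hS.exists_isLeast ⟨z, ⟨hxz, le_rfl⟩, hfz⟩
  have hpos : ∀ s ∈ Ico x₀ b, 0 < f s := fun s hs =>
    not_le.1 fun h => hs.2.not_ge (hmin ⟨⟨hs.1, hs.2.le.trans hbz⟩, h⟩)
  obtain ⟨w, hw, hfw⟩ := intermediate_value_Icc' hxb hf.continuousOn ⟨hfb, hx₀.le⟩
  have hwb : w = b := le_antisymm hw.2 (hmin ⟨⟨hw.1, hw.2.trans hbz⟩, hfw.le⟩)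
  have hxb' : x₀ < b := hxb.lt_of_ne fun h => (h ▸ hx₀).not_ge hfb
  exact ⟨b, hxb', hwb ▸ hfw, hpos⟩

theorem exists_hasDerivAt_of_pos_of_nonpos {f : ℝ → ℝ} (hf : LocallyLipschitz f) {x₀ T : ℝ}
    (hx₀ : 0 < f x₀) (hz : ∃ z, x₀ ≤ z ∧ f z ≤ 0) :
    ∃ ρ : ℝ → ℝ, ρ 0 = x₀ ∧ ∀ t ∈ Icc 0 T, HasDerivAt ρ (f (ρ t)) t := by
  have hc := hf.continuous
  obtain ⟨b, hxb, hfb, hpos⟩ := exists_eq_zero_of_pos_of_nonpos hc hx₀ hz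
  obtain ⟨K, hK⟩ := hf.locallyLipschitzOn.exists_lipschitzOnWith_of_compact
    (isCompact_Icc (a := x₀) (b := b))
  have htop := setLIntegral_Ioc_inv_ofReal_eq_top hxb hK (right_mem_Icc.2 hxb.le) hfb.le
  obtain ⟨v, hv, hTv⟩ := exists_lt_setLIntegral_Ioc_of_lt_setLIntegral_Ioc (by fun_prop) hxb
    (htop ▸ ENNReal.ofReal_lt_top (r := T))
  exact exists_hasDerivAt_of_lt_setLIntegral hc hv.1
    (fun s hs => hpos s ⟨hs.1, hs.2.trans_lt hv.2⟩) hTv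

theorem eqOn_Icc_of_hasDerivAt {f : ℝ → ℝ} (hf : LocallyLipschitz f) {ρ₁ ρ₂ : ℝ → ℝ} {a b : ℝ}
    (h₁ : ∀ t ∈ Icc a b, HasDerivAt ρ₁ (f (ρ₁ t)) t)
    (h₂ : ∀ t ∈ Icc a b, HasDerivAt ρ₂ (f (ρ₂ t)) t)
    (ha : ρ₁ a = ρ₂ a) : EqOn ρ₁ ρ₂ (Icc a b) := by
  have hc₁ : ContinuousOn ρ₁ (Icc a b) := fun t ht => (h₁ t ht).continuousAt.continuousWithinAt
  have hc₂ : ContinuousOn ρ₂ (Icc a b) := fun t ht => (h₂ t ht).continuousAt.continuousWithinAt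
  obtain ⟨C₁, hC₁⟩ := isCompact_Icc.exists_bound_of_continuousOn hc₁
  obtain ⟨C₂, hC₂⟩ := isCompact_Icc.exists_bound_of_continuousOn hc₂
  obtain ⟨K, hK⟩ := hf.locallyLipschitzOn.exists_lipschitzOnWith_of_compact
    (isCompact_closedBall (0 : ℝ) (max C₁ C₂))
  exact ODE_solution_unique_of_mem_Icc_right (v := fun _ => f) (fun _ _ => hK)
    hc₁ (fun t ht => (h₁ t (Ico_subset_Icc_self ht)).hasDerivWithinAt)
    (fun t ht => mem_closedBall_zero_iff.2
      ((hC₁ t (Ico_subset_Icc_self ht)).trans (le_max_left _ _)))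
    hc₂ (fun t ht => (h₂ t (Ico_subset_Icc_self ht)).hasDerivWithinAt)
    (fun t ht => mem_closedBall_zero_iff.2
      ((hC₂ t (Ico_subset_Icc_self ht)).trans (le_max_right _ _)))
    ha

theorem SatisfiesEllCond.ofReal_lt_lintegral {T : ℝ} {f : ℝ → ℝ} (hf : LocallyLipschitz f)
    (h : SatisfiesEllCond T f) :
    ENNReal.ofReal T < ∫⁻ s in Ioi 1, (ENNReal.ofReal (f s))⁻¹ := by
  have hblow {b z : ℝ} (hb : 1 < b) (hz : z ∈ Icc 1 b) (hfz : f z ≤ 0) :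
      ∫⁻ s in Ioi 1, (ENNReal.ofReal (f s))⁻¹ = ⊤ := by
    obtain ⟨K, hK⟩ := hf.locallyLipschitzOn.exists_lipschitzOnWith_of_compact
      (isCompact_Icc (a := 1) (b := b))
    exact eq_top_iff.2 ((setLIntegral_Ioc_inv_ofReal_eq_top hb hK hz hfz).ge.trans
      (lintegral_mono_set Ioc_subset_Ioi_self))
  rcases h with h1 | ⟨-, b, hb, hfb, -⟩ | ⟨hpos, hT⟩
  · simp [hblow one_lt_two ⟨le_rfl, one_le_two⟩ h1]
  · simp [hblow hb ⟨hb.le, le_rfl⟩ hfb.le]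
  · refine hT.trans_eq (setLIntegral_congr_fun measurableSet_Ioi fun s hs => ?_)
    rw [one_div, ENNReal.ofReal_inv_of_pos (hpos s (le_of_lt hs))]

theorem satisfiesEllCond_of_ofReal_lt_lintegral {T : ℝ} {f : ℝ → ℝ} (hf : Continuous f)
    (h : ENNReal.ofReal T < ∫⁻ s in Ioi 1, (ENNReal.ofReal (f s))⁻¹) :
    SatisfiesEllCond T f := by
  by_cases hz : ∃ z, 1 ≤ z ∧ f z ≤ 0
  · by_cases h1 : f 1 ≤ 0
    · exact Or.inl h1
    · exact Or.inr (Or.inl ⟨not_le.1 h1, exists_eq_zero_of_pos_of_nonpos hf (not_le.1 h1) hz⟩)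
  · push Not at hz
    refine Or.inr (Or.inr ⟨hz, h.trans_eq <|
      setLIntegral_congr_fun measurableSet_Ioi fun s hs => ?_⟩)
    rw [one_div, ENNReal.ofReal_inv_of_pos (hz s (le_of_lt hs))]

theorem SatisfiesEllCond.eventually_nhdsGT {T : ℝ} {f : ℝ → ℝ → ℝ}
    (hf₀ : LocallyLipschitz (f 0)) (hf : ∀ ε > 0, Continuous (f ε))
    (hmono : ∀ s > 1, MonotoneOn (f · s) (Ici 0))
    (hcont : ∀ s > 1, ContinuousWithinAt (f · s) (Ioi 0) 0) (h : SatisfiesEllCond T (f 0)) :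
    ∀ᶠ ε in 𝓝[>] 0, SatisfiesEllCond T (f ε) := by
  set δ : ℕ → ℝ := fun n => 1 / (n + 1)
  have hδpos (n : ℕ) : 0 < δ n := Nat.one_div_pos_of_nat
  have hδ : Tendsto δ atTop (𝓝[>] 0) := tendsto_nhdsWithin_iff.2
    ⟨tendsto_one_div_add_atTop_nhds_zero_nat, Eventually.of_forall hδpos⟩
  have hanti {e e' s : ℝ} (hs : s ∈ Ioi 1) (he : 0 ≤ e) (hee' : e ≤ e') :
      (ENNReal.ofReal (f e' s))⁻¹ ≤ (ENNReal.ofReal (f e s))⁻¹ :=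
    ENNReal.inv_le_inv.2 (ENNReal.ofReal_le_ofReal (hmono s hs he (he.trans hee') hee'))
  have hlim : Tendsto (fun n => ∫⁻ s in Ioi 1, (ENNReal.ofReal (f (δ n) s))⁻¹) atTop
      (𝓝 (∫⁻ s in Ioi 1, (ENNReal.ofReal (f 0 s))⁻¹)) :=
    lintegral_tendsto_of_tendsto_of_monotone
      (fun n => have := hf (δ n) (hδpos n); by fun_prop)
      (ae_restrict_of_forall_mem measurableSet_Ioi fun s hs m n hmn =>
        hanti hs (hδpos n).le (Nat.one_div_le_one_div hmn))
      (ae_restrict_of_forall_mem measurableSet_Ioi fun s hs =>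
        (ENNReal.tendsto_ofReal ((hcont s hs).tendsto.comp hδ)).inv)
  obtain ⟨N, hN⟩ := (hlim.eventually_const_lt (h.ofReal_lt_lintegral hf₀)).exists
  filter_upwards [Ioo_mem_nhdsGT (hδpos N)] with e he
  exact satisfiesEllCond_of_ofReal_lt_lintegral (hf e he.1) (hN.trans_le
    (setLIntegral_mono' measurableSet_Ioi fun s hs => hanti hs he.1.le he.2.le))

theorem SatisfiesEllCond.exists_hasDerivAt {T : ℝ} {f : ℝ → ℝ} (hf : LocallyLipschitz f)
    (h₀ : 0 ≤ f 0) (h : SatisfiesEllCond T f) :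
    ∃ ρ : ℝ → ℝ, ρ 0 = 1 ∧ ∀ t ∈ Icc 0 T, HasDerivAt ρ (f (ρ t)) t := by
  have hI := h.ofReal_lt_lintegral hf
  rcases h with h1 | ⟨h1, b, hb, hfb, -⟩ | ⟨hpos, -⟩
  · rcases h1.lt_or_eq with h1 | h1
    · -- `ρ` decreases towards the largest zero of `f` below `1`: reflect through `s ↦ -s`.
      have hg : LocallyLipschitz fun s => -f (-s) :=
        (hf.comp LipschitzWith.id.neg.locallyLipschitz).neg
      obtain ⟨σ, hσ₀, hσ⟩ := exists_hasDerivAt_of_pos_of_nonpos (x₀ := -1) (T := T) hg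
        (by simpa using h1) ⟨0, by norm_num, by simpa using h₀⟩
      exact ⟨fun t => -σ t, by simp [hσ₀],
        fun t ht => by simpa only [neg_neg] using (hσ t ht).fun_neg⟩
    · exact ⟨fun _ => 1, rfl, fun t _ => h1 ▸ hasDerivAt_const t 1⟩
  · exact exists_hasDerivAt_of_pos_of_nonpos hf h1 ⟨b, hb.le, hfb.le⟩
  · have hc := hf.continuous
    obtain ⟨v, hv, hTv⟩ := exists_lt_setLIntegral_Ioc_of_lt_setLIntegral_Ioi (by fun_prop) hI
    exact exists_hasDerivAt_of_lt_setLIntegral hc hv (fun s hs => hpos s hs.1) hTv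

theorem monotoneOn_sum_mul_pow {d : ℕ → ℝ} (hd : ∀ k, 0 ≤ d k) (s : Finset ℕ) :
    MonotoneOn (fun x => ∑ k ∈ s, d k * x ^ k) (Ici 0) := fun _ hx _ _ hxy =>
  Finset.sum_le_sum fun k _ => mul_le_mul_of_nonneg_left (pow_le_pow_left₀ hx hxy k) (hd k)

theorem SatisfiesEllCond.eventually_comp_mul {T β : ℝ} {P : ℝ → ℝ} (hβ : 0 ≤ β)
    (hP : ContDiff ℝ 1 P) (hmono : MonotoneOn P (Ici 0))
    (h : SatisfiesEllCond T fun s => β * (P s - s)) :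
    ∀ᶠ ε in 𝓝[>] 0, SatisfiesEllCond T fun s => β * (P ((1 + ε) * s) - s) := by
  have := hP.continuous
  refine SatisfiesEllCond.eventually_nhdsGT (f := fun ε s => β * (P ((1 + ε) * s) - s))
    (ContDiff.locallyLipschitz (𝕂 := ℝ) (by fun_prop)) (fun ε _ => by fun_prop)
    (fun s hs e he e' he' hee' => ?_) (fun s _ => by fun_prop) (by simpa using h)
  have hs₀ : (0 : ℝ) ≤ s := zero_le_one.trans (le_of_lt hs)
  have hPs : P ((1 + e) * s) ≤ P ((1 + e') * s) :=
    hmono (mul_nonneg (by linarith [mem_Ici.1 he]) hs₀)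
      (mul_nonneg (by linarith [mem_Ici.1 he']) hs₀) (by gcongr)
  dsimp only
  gcongr

theorem stmt_8_general (β ψ₀ T : ℝ) (hβ : 0 < β) (hψ₀ : 0 < ψ₀)
    (n₀ : ℕ) (c : ℕ → ℝ) (hc : ∀ k, 0 ≤ c k)
    (hcond : SatisfiesEllCond T
      (fun s => β * (∑ k ∈ Finset.range (n₀ + 1), c k * ψ₀ ^ ((k : ℤ) - 1) * s ^ k - s))) :
    ∃ ε₀ > 0, ∀ ε : ℝ, 0 < ε → ε < ε₀ →
      (SatisfiesEllCond T
        (fun s => β * (∑ k ∈ Finset.range (n₀ + 1),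
          ((1 + ε) * c k) * ((1 + ε) * ψ₀) ^ ((k : ℤ) - 1) * s ^ k - s))) ∧
      (∃ ρ : ℝ → ℝ, ρ 0 = 1 ∧
        (∀ t ∈ Icc (0 : ℝ) T, HasDerivAt ρ
          (β * (∑ k ∈ Finset.range (n₀ + 1),
            ((1 + ε) * c k) * ((1 + ε) * ψ₀) ^ ((k : ℤ) - 1) * ρ t ^ k - ρ t)) t) ∧
        (∃ Cb : ℝ, ∀ t ∈ Icc (0 : ℝ) T, |ρ t| ≤ Cb)) ∧
      (∀ ρ₁ ρ₂ : ℝ → ℝ,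
        (ρ₁ 0 = 1 ∧
          (∀ t ∈ Icc (0 : ℝ) T, HasDerivAt ρ₁
            (β * (∑ k ∈ Finset.range (n₀ + 1),
              ((1 + ε) * c k) * ((1 + ε) * ψ₀) ^ ((k : ℤ) - 1) * ρ₁ t ^ k - ρ₁ t)) t) ∧
          (∃ Cb : ℝ, ∀ t ∈ Icc (0 : ℝ) T, |ρ₁ t| ≤ Cb)) →
        (ρ₂ 0 = 1 ∧
          (∀ t ∈ Icc (0 : ℝ) T, HasDerivAt ρ₂
            (β * (∑ k ∈ Finset.range (n₀ + 1),
              ((1 + ε) * c k) * ((1 + ε) * ψ₀) ^ ((k : ℤ) - 1) * ρ₂ t ^ k - ρ₂ t)) t) ∧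
          (∃ Cb : ℝ, ∀ t ∈ Icc (0 : ℝ) T, |ρ₂ t| ≤ Cb)) →
        EqOn ρ₁ ρ₂ (Icc 0 T)) := by
  set d : ℕ → ℝ := fun k => c k * ψ₀ ^ ((k : ℤ) - 1)
  have hd k : 0 ≤ d k := mul_nonneg (hc k) (zpow_nonneg hψ₀.le _)
  set P : ℝ → ℝ := fun x => ∑ k ∈ Finset.range (n₀ + 1), d k * x ^ k
  obtain ⟨ε₀, hε₀, hstab⟩ := (nhdsGT_basis 0).eventually_iff.1 <|
    SatisfiesEllCond.eventually_comp_mul hβ.le (by fun_prop) (monotoneOn_sum_mul_pow hd _) hcond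
  refine ⟨ε₀, hε₀, fun ε hε hεε₀ => ?_⟩
  have hℓ (s : ℝ) : β * (∑ k ∈ Finset.range (n₀ + 1),
      ((1 + ε) * c k) * ((1 + ε) * ψ₀) ^ ((k : ℤ) - 1) * s ^ k - s) =
      β * (P ((1 + ε) * s) - s) := by
    congr 2
    refine Finset.sum_congr rfl fun k _ => ?_
    rw [mul_zpow, zpow_sub_one₀ (by positivity), zpow_natCast, mul_pow]
    field_simp
    ring
  simp only [hℓ]
  have hLip : LocallyLipschitz fun s => β * (P ((1 + ε) * s) - s) :=
    ContDiff.locallyLipschitz (𝕂 := ℝ) (by fun_prop)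
  have hcondε := hstab ⟨hε, hεε₀⟩
  obtain ⟨ρ, hρ₀, hρ⟩ := hcondε.exists_hasDerivAt hLip
    (by simpa [P] using mul_nonneg hβ.le
          (Finset.sum_nonneg fun k _ => mul_nonneg (hd k) (pow_nonneg le_rfl k)))
  obtain ⟨C, hC⟩ := isCompact_Icc.exists_bound_of_continuousOn
    fun t ht => (hρ t ht).continuousAt.continuousWithinAt
  exact ⟨hcondε, ⟨ρ, hρ₀, hρ, C, hC⟩, fun ρ₁ ρ₂ ⟨h₁₀, h₁, _⟩ ⟨h₂₀, h₂, _⟩ =>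
    eqOn_Icc_of_hasDerivAt hLip h₁ h₂ (h₁₀.trans h₂₀.symm)⟩

/-- Stability of the existence conditions under the `(1+ε)`-perturbation of the
coefficients: if `ℓ(s) = β(∑ₖ cₖ ψ₀^{k-1} s^k - s)` satisfies one of `(ℓ1)-(ℓ3)`, then
for all small `ε > 0` so does `ℓ_ε(s) = β(∑ₖ (1+ε)cₖ ((1+ε)ψ₀)^{k-1} s^k - s)`, and hence
the ODE `ρ' = ℓ_ε(ρ)`, `ρ(0) = 1` has a unique bounded solution on `[0,T]`. -/
theorem stmt_8 (β ψ₀ T : ℝ) (hβ : 0 < β) (hψ₀ : 0 < ψ₀) (hT : 0 < T)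
    (n₀ : ℕ) (c : ℕ → ℝ) (hc : ∀ k, 0 ≤ c k)
    (hcond : SatisfiesEllCond T
      (fun s => β * (∑ k ∈ Finset.range (n₀ + 1), c k * ψ₀ ^ ((k : ℤ) - 1) * s ^ k - s))) :
    ∃ ε₀ > 0, ∀ ε : ℝ, 0 < ε → ε < ε₀ →
      (SatisfiesEllCond T
        (fun s => β * (∑ k ∈ Finset.range (n₀ + 1),
          ((1 + ε) * c k) * ((1 + ε) * ψ₀) ^ ((k : ℤ) - 1) * s ^ k - s))) ∧
      (∃ ρ : ℝ → ℝ, ρ 0 = 1 ∧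
        (∀ t ∈ Icc (0 : ℝ) T, HasDerivAt ρ
          (β * (∑ k ∈ Finset.range (n₀ + 1),
            ((1 + ε) * c k) * ((1 + ε) * ψ₀) ^ ((k : ℤ) - 1) * ρ t ^ k - ρ t)) t) ∧
        (∃ Cb : ℝ, ∀ t ∈ Icc (0 : ℝ) T, |ρ t| ≤ Cb)) ∧
      (∀ ρ₁ ρ₂ : ℝ → ℝ,
        (ρ₁ 0 = 1 ∧
          (∀ t ∈ Icc (0 : ℝ) T, HasDerivAt ρ₁
            (β * (∑ k ∈ Finset.range (n₀ + 1),
              ((1 + ε) * c k) * ((1 + ε) * ψ₀) ^ ((k : ℤ) - 1) * ρ₁ t ^ k - ρ₁ t)) t) ∧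
          (∃ Cb : ℝ, ∀ t ∈ Icc (0 : ℝ) T, |ρ₁ t| ≤ Cb)) →
        (ρ₂ 0 = 1 ∧
          (∀ t ∈ Icc (0 : ℝ) T, HasDerivAt ρ₂
            (β * (∑ k ∈ Finset.range (n₀ + 1),
              ((1 + ε) * c k) * ((1 + ε) * ψ₀) ^ ((k : ℤ) - 1) * ρ₂ t ^ k - ρ₂ t)) t) ∧
          (∃ Cb : ℝ, ∀ t ∈ Icc (0 : ℝ) T, |ρ₂ t| ≤ Cb)) →
        EqOn ρ₁ ρ₂ (Icc 0 T)) :=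
  stmt_8_general β ψ₀ T hβ hψ₀ n₀ c hc hcond
end
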